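/- arXiv:1802.02538 — 2 statements merged into one kernel-verified Lean document; each statement's English description precedes it below -/
import Mathlib

section
/- Let p and q be probability density functions on ℝ^K with q(θ) > 0 wherever p(θ) > 0. For any coordinate index i and any real α > 1, if the α-th moment of the importance ratio is finite, i.e., ∫ (p(θ)/q(θ))^α q(θ) dθ < ∞, then the α-th moment of the marginal importance ratio is also finite: ∫ (p_i(θ_i)/q_i(θ_i))^α q_i(θ_i) dθ_i < ∞, where p_i and q_i denote the i-th marginal densities of p and q. -/
open MeasureTheory ENNReal

/-- The `i`-th marginal density of a density on `ℝ^K`: integrate out all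
coordinates except the `i`-th one. -/
noncomputable def marginalDensity {K : ℕ} (i : Fin K) (p : (Fin K → ℝ) → ℝ≥0∞) (t : ℝ) : ℝ≥0∞ :=
  MeasureTheory.lmarginal (fun _ : Fin K => (volume : Measure ℝ)) ({i}ᶜ : Finset (Fin K)) p
    (fun _ => t)

/-!
By Hölder's inequality against the constant `1`, the map `x ↦ x ^ α` satisfies Jensen's
inequality for any finite measure; applied on the fibre `{θ | θ i = t}` with weight `q`, it gives
`(p_i(t) / q_i(t)) ^ α * q_i(t) ≤ ∫ (p/q) ^ α q` over that fibre for almost every `t`.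
Integrating in `t` (Fubini) bounds the marginal moment by the full one.
-/

theorem ENNReal.div_rpow_mul_le_of_le_rpow_mul_rpow {p q : ℝ} (hpq : p.HolderConjugate q)
    {a b c : ℝ≥0∞} (hc : c ≠ ⊤) (h : a ≤ b ^ (1 / p) * c ^ (1 / q)) :
    (a / c) ^ p * c ≤ b := by
  rcases eq_or_ne c 0 with rfl | hc0
  · simp
  have hc_div : c ^ (1 / q) / c = c ^ (-(1 / p)) := by
    rw [div_eq_mul_inv, ← rpow_neg_one, ← rpow_add _ _ hc0 hc, one_div, one_div,
      ← sub_eq_add_neg, hpq.symm.inv_sub_one]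
  calc (a / c) ^ p * c ≤ (b ^ (1 / p) * c ^ (1 / q) / c) ^ p * c := by
        gcongr
        exact hpq.nonneg
    _ = b * c⁻¹ * c := by
      rw [mul_div_assoc, hc_div, mul_rpow_of_nonneg _ _ hpq.nonneg, ← rpow_mul, ← rpow_mul,
        neg_mul, one_div_mul_cancel hpq.ne_zero, rpow_one, rpow_neg_one]
    _ = b := by rw [mul_assoc, ENNReal.inv_mul_cancel hc0 hc, mul_one]

/-- Jensen's inequality for `x ↦ x ^ p`. -/
theorem lintegral_div_measure_univ_rpow_mul_le {α : Type*} [MeasurableSpace α] {μ : Measure α}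
    [IsFiniteMeasure μ] {p : ℝ} (hp : 1 < p) {f : α → ℝ≥0∞} (hf : AEMeasurable f μ) :
    ((∫⁻ x, f x ∂μ) / μ Set.univ) ^ p * μ Set.univ ≤ ∫⁻ x, f x ^ p ∂μ := by
  have hpq := Real.HolderConjugate.conjExponent hp
  refine div_rpow_mul_le_of_le_rpow_mul_rpow hpq (measure_ne_top μ _) ?_
  simpa using ENNReal.lintegral_mul_le_Lp_mul_Lq μ hpq hf aemeasurable_const (g := 1)

theorem lintegral_mul_div_lintegral_rpow_mul_le {α : Type*} [MeasurableSpace α] (μ : Measure α)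
    {p : ℝ} (hp : 1 < p) {r g : α → ℝ≥0∞} (hr : Measurable r) (hg : Measurable g)
    (hg_fin : ∫⁻ x, g x ∂μ ≠ ⊤) :
    ((∫⁻ x, r x * g x ∂μ) / ∫⁻ x, g x ∂μ) ^ p * ∫⁻ x, g x ∂μ ≤ ∫⁻ x, r x ^ p * g x ∂μ := by
  have := isFiniteMeasure_withDensity hg_fin
  simpa only [withDensity_apply _ MeasurableSet.univ, Measure.restrict_univ,
    lintegral_withDensity_eq_lintegral_mul _ hg hr,
    lintegral_withDensity_eq_lintegral_mul _ hg (hr.pow_const p), Pi.mul_apply, mul_comm (g _)]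
    using lintegral_div_measure_univ_rpow_mul_le hp hr.aemeasurable (μ := μ.withDensity g)

section marginalDensity

variable {K : ℕ} (i : Fin K) {f g : (Fin K → ℝ) → ℝ≥0∞}

theorem measurable_marginalDensity (hf : Measurable f) : Measurable (marginalDensity i f) :=
  (hf.lmarginal _).comp (measurable_pi_lambda _ fun _ => measurable_id)

theorem lintegral_marginalDensity (hf : Measurable f) :
    ∫⁻ t, marginalDensity i f t = ∫⁻ θ, f θ := by
  have hi : i ∉ ({i}ᶜ : Finset (Fin K)) := Finset.notMem_compl.2 (Finset.mem_singleton_self i)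
  have h := lmarginal_insert (μ := fun _ : Fin K => (volume : Measure ℝ)) f hf hi 0
  rw [Finset.insert_compl_self, lmarginal_univ, ← volume_pi] at h
  dsimp only at h
  rw [h]
  refine lintegral_congr fun t => lmarginal_congr _ _ fun j hj => ?_
  obtain rfl : j = i := by simpa using hj
  simp

theorem marginalDensity_ae_eq_of_ae_eq (hf : Measurable f) (hg : Measurable g)
    (hfg : f =ᵐ[volume] g) : marginalDensity i f =ᵐ[volume] marginalDensity i g := by
  -- `{f ≠ g}` is null, so it is null on almost every fibre of the marginal.
  set s := {θ | f θ ≠ g θ}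
  set χ : (Fin K → ℝ) → ℝ≥0∞ := s.indicator 1
  have hs : MeasurableSet s := (measurableSet_eq_fun hf hg).compl
  have hs_ind : Measurable χ := measurable_one.indicator hs
  have h_null : ∀ᵐ t, marginalDensity i χ t = 0 := by
    refine (lintegral_eq_zero_iff (measurable_marginalDensity i hs_ind)).1 ?_
    rw [lintegral_marginalDensity i hs_ind, lintegral_indicator_one hs]
    exact ae_iff.1 hfg
  filter_upwards [h_null] with t ht
  have h_fiber := (lintegral_eq_zero_iff (hs_ind.comp measurable_updateFinset)).1 ht
  refine lintegral_congr_ae ?_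
  filter_upwards [h_fiber] with y hy
  simpa [χ, s] using hy

theorem marginalDensity_div_rpow_mul_le {r : (Fin K → ℝ) → ℝ≥0∞} (hr : Measurable r)
    (hg : Measurable g) {p : ℝ} (hp : 1 < p) {t : ℝ} (ht : marginalDensity i g t ≠ ⊤) :
    (marginalDensity i (fun θ => r θ * g θ) t / marginalDensity i g t) ^ p
        * marginalDensity i g t ≤ marginalDensity i (fun θ => r θ ^ p * g θ) t :=
  lintegral_mul_div_lintegral_rpow_mul_le _ hp (hr.comp measurable_updateFinset)
    (hg.comp measurable_updateFinset) ht

end marginalDensity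

theorem marginal_importance_moment_finite_general {K : ℕ} (p q : (Fin K → ℝ) → ℝ≥0∞)
    (hp : Measurable p) (hq : Measurable q)
    (hq1 : ∫⁻ θ, q θ = 1)
    (habs : ∀ᵐ θ, p θ ≠ 0 → q θ ≠ 0)
    (i : Fin K) (α : ℝ) (hα : 1 < α)
    (hfin : ∫⁻ θ, (p θ / q θ) ^ α * q θ < ⊤) :
    ∫⁻ t : ℝ, (marginalDensity i p t / marginalDensity i q t) ^ α * marginalDensity i q t < ⊤ := by
  have hr : Measurable fun θ => p θ / q θ := hp.div hq
  have hp_eq : p =ᵐ[volume] fun θ => p θ / q θ * q θ := by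
    filter_upwards [habs, ae_lt_top hq (by simp [hq1])] with θ h_abs hq_top
    rcases eq_or_ne (q θ) 0 with hq0 | hq0
    · simp [hq0, not_imp_not.1 h_abs hq0]
    · exact (ENNReal.div_mul_cancel hq0 hq_top.ne).symm
  have hq_marg : ∀ᵐ t, marginalDensity i q t ≠ ⊤ :=
    (ae_lt_top (measurable_marginalDensity i hq)
      (by simp [lintegral_marginalDensity i hq, hq1])).mono fun _ => LT.lt.ne
  calc ∫⁻ t, (marginalDensity i p t / marginalDensity i q t) ^ α * marginalDensity i q t
      = ∫⁻ t, (marginalDensity i (fun θ => p θ / q θ * q θ) t / marginalDensity i q t) ^ α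
          * marginalDensity i q t := by
        refine lintegral_congr_ae ?_
        filter_upwards [marginalDensity_ae_eq_of_ae_eq i hp (by fun_prop) hp_eq] with t ht
        rw [ht]
    _ ≤ ∫⁻ t, marginalDensity i (fun θ => (p θ / q θ) ^ α * q θ) t := by
        refine lintegral_mono_ae ?_
        filter_upwards [hq_marg] with t ht
        exact marginalDensity_div_rpow_mul_le i hr hq hα ht
    _ = ∫⁻ θ, (p θ / q θ) ^ α * q θ :=
        lintegral_marginalDensity i ((hr.pow_const α).mul hq)
    _ < ⊤ := hfin

/-- If the `α`-th moment (α > 1) of the importance ratio `p/q` under `q` is finite, then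
the `α`-th moment of the marginal importance ratio `p_i/q_i` under `q_i` is also finite. -/
theorem marginal_importance_moment_finite {K : ℕ} (p q : (Fin K → ℝ) → ℝ≥0∞)
    (hp : Measurable p) (hq : Measurable q)
    (hp1 : ∫⁻ θ, p θ = 1) (hq1 : ∫⁻ θ, q θ = 1)
    (habs : ∀ᵐ θ, p θ ≠ 0 → q θ ≠ 0)
    (i : Fin K) (α : ℝ) (hα : 1 < α)
    (hfin : ∫⁻ θ, (p θ / q θ) ^ α * q θ < ⊤) :
    ∫⁻ t : ℝ, (marginalDensity i p t / marginalDensity i q t) ^ α * marginalDensity i q t < ⊤ :=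
  marginal_importance_moment_finite_general p q hp hq hq1 habs i α hα hfin
end

section
/- Let θ be one-dimensional. Assume for every dataset y: (i) the variational approximation q(·|y) is symmetric about its mean, (ii) the true posterior p(·|y) is symmetric about its mean, and (iii) q is unbiased, i.e., E_{q(·|y)}[θ] = E_{p(·|y)}[θ]. Then the VSBC p-value Q(θ^{(0)}, y) = Pr_{θ* ∼ q(·|y)}(θ* ≤ θ^{(0)}), with θ^{(0)} ∼ prior and y ∼ p(y|θ^{(0)}), has a symmetric distribution about 1/2: Pr(Q ≤ x) = Pr(Q ≥ 1−x) for all x ∈ [0,1]. -/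
/-!
Reflect about the common centre `m = mq y = mp y`. Symmetry of `q(·|y)` gives
`Fq y (2m - t) = 1 - Fq y t`, so `{Q ≥ 1 - x}` is the mirror image of `{Q ≤ x}` on every fibre;
symmetry of the posterior, whose CDF has no atoms, makes the posterior law invariant under the
mirror. Integrating over `y` against the marginal gives the claim.
-/

open MeasureTheory ProbabilityTheory Filter

lemma apply_two_mul_sub_eq_one_sub {f : ℝ → ℝ} {m : ℝ} (hf : ∀ t, f (m + t) = 1 - f (m - t))
    (t : ℝ) : f (2 * m - t) = 1 - f t := by
  have h := hf (m - t)
  rwa [show m + (m - t) = 2 * m - t by ring, sub_sub_cancel] at h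

lemma preimage_two_mul_sub_setOf_le {f : ℝ → ℝ} {m : ℝ} (hf : ∀ t, f (m + t) = 1 - f (m - t))
    (x : ℝ) : (fun t => 2 * m - t) ⁻¹' {t | f t ≤ x} = {t | 1 - x ≤ f t} := by
  ext t
  change f (2 * m - t) ≤ x ↔ 1 - x ≤ f t
  rw [apply_two_mul_sub_eq_one_sub hf]
  constructor <;> intro h <;> linarith

lemma StieltjesFunction.map_two_mul_sub_measure {F : StieltjesFunction ℝ} {m : ℝ}
    (hF_cont : Continuous F) (hF_bot : Tendsto F atBot (nhds 0))
    (hF_top : Tendsto F atTop (nhds 1)) (hF_symm : ∀ t, F (m + t) = 1 - F (m - t)) :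
    F.measure.map (fun t => 2 * m - t) = F.measure := by
  have := F.isProbabilityMeasure hF_bot hF_top
  have h_meas : Measurable fun t : ℝ => 2 * m - t := by fun_prop
  refine Measure.ext_of_Iic _ _ fun s => ?_
  have h_preimage : (fun t => 2 * m - t) ⁻¹' Set.Iic s = Set.Ici (2 * m - s) := by
    ext t
    simp only [Set.mem_preimage, Set.mem_Iic, Set.mem_Ici]
    constructor <;> intro h <;> linarith
  have h_leftLim : Function.leftLim F (2 * m - s) = F (2 * m - s) :=
    leftLim_eq_of_tendsto ((hF_cont.tendsto _).mono_left nhdsWithin_le_nhds)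
  rw [Measure.map_apply h_meas measurableSet_Iic, h_preimage, F.measure_Ici hF_top,
    F.measure_Iic hF_bot, h_leftLim, apply_two_mul_sub_eq_one_sub hF_symm, sub_sub_cancel,
    sub_zero]

lemma measure_eq_lintegral_condCDF_measure {Y : Type*} [MeasurableSpace Y]
    (ρ : Measure (Y × ℝ)) [IsFiniteMeasure ρ] {s : Set (Y × ℝ)} (hs : MeasurableSet s) :
    ρ s = ∫⁻ y, (condCDF ρ y).measure (Prod.mk y ⁻¹' s) ∂ρ.fst :=
  (lintegral_toKernel_mem (isCondKernelCDF_condCDF ρ) () hs).symm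

theorem vsbc_symmetric_general {Y : Type*} [MeasurableSpace Y]
    (ρ : Measure (Y × ℝ)) [IsProbabilityMeasure ρ]
    (Fq : Y → ℝ → ℝ) (mq mp : Y → ℝ)
    (hFq_meas : Measurable fun z : Y × ℝ => Fq z.1 z.2)
    (hFq_symm : ∀ y t, Fq y (mq y + t) = 1 - Fq y (mq y - t))
    (hFp_cont : ∀ y, Continuous fun t => condCDF ρ y t)
    (hFp_symm : ∀ y t, condCDF ρ y (mp y + t) = 1 - condCDF ρ y (mp y - t))
    (hunbiased : ∀ y, mq y = mp y) :
    ∀ x ∈ Set.Icc (0 : ℝ) 1,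
      ρ {z : Y × ℝ | Fq z.1 z.2 ≤ x} = ρ {z : Y × ℝ | 1 - x ≤ Fq z.1 z.2} := by
  intro x _
  rw [measure_eq_lintegral_condCDF_measure ρ (s := {z | Fq z.1 z.2 ≤ x})
      (hFq_meas measurableSet_Iic),
    measure_eq_lintegral_condCDF_measure ρ (s := {z | 1 - x ≤ Fq z.1 z.2})
      (hFq_meas measurableSet_Ici)]
  refine lintegral_congr fun y => ?_
  have h_invariant := (condCDF ρ y).map_two_mul_sub_measure (hFp_cont y)
    (tendsto_condCDF_atBot ρ y) (tendsto_condCDF_atTop ρ y) (hFp_symm y)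
  have h_mirror := preimage_two_mul_sub_setOf_le (hFq_symm y) x
  rw [hunbiased y] at h_mirror
  change (condCDF ρ y).measure {t | Fq y t ≤ x} = (condCDF ρ y).measure {t | 1 - x ≤ Fq y t}
  have h_fibre_meas : MeasurableSet {t | Fq y t ≤ x} :=
    (hFq_meas.comp measurable_prodMk_left) measurableSet_Iic
  rw [← h_mirror, ← Measure.map_apply (by fun_prop) h_fibre_meas, h_invariant]

/-- VSBC symmetry: let `ρ` be the joint distribution of `(y, θ⁰)` (so that, given `y`,
`θ⁰` is a draw from the posterior, whose CDF is `condCDF ρ y`), and let `Fq y` be the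
CDF of the variational approximation `q(·|y)`. Assume both `q(·|y)` and the posterior
are symmetric (about `mq y` resp. `mp y`, which are their means) with continuous
strictly increasing CDFs, and that `q` is unbiased (`mq y = mp y` for all `y`). Then
the VSBC p-value `Q = Fq y (θ⁰)` has a distribution symmetric about `1/2`:
`Pr(Q ≤ x) = Pr(Q ≥ 1−x)` for all `x ∈ [0,1]`. -/
theorem vsbc_symmetric {Y : Type*} [MeasurableSpace Y]
    (ρ : Measure (Y × ℝ)) [IsProbabilityMeasure ρ]
    (Fq : Y → ℝ → ℝ) (mq mp : Y → ℝ)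
    (hFq_meas : Measurable fun z : Y × ℝ => Fq z.1 z.2)
    (hFq_cont : ∀ y, Continuous (Fq y))
    (hFq_mono : ∀ y, StrictMono (Fq y))
    (hFq_bot : ∀ y, Tendsto (Fq y) atBot (nhds 0))
    (hFq_top : ∀ y, Tendsto (Fq y) atTop (nhds 1))
    (hFq_symm : ∀ y t, Fq y (mq y + t) = 1 - Fq y (mq y - t))
    (hFp_cont : ∀ y, Continuous fun t => condCDF ρ y t)
    (hFp_mono : ∀ y, StrictMono fun t => condCDF ρ y t)
    (hFp_symm : ∀ y t, condCDF ρ y (mp y + t) = 1 - condCDF ρ y (mp y - t))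
    (hunbiased : ∀ y, mq y = mp y) :
    ∀ x ∈ Set.Icc (0 : ℝ) 1,
      ρ {z : Y × ℝ | Fq z.1 z.2 ≤ x} = ρ {z : Y × ℝ | 1 - x ≤ Fq z.1 z.2} :=
  vsbc_symmetric_general ρ Fq mq mp hFq_meas hFq_symm hFp_cont hFp_symm hunbiased
end
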